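/- Let G = (√5+1)/2, g = G − 1, B = (5G−2)^{1/5} and q = (g/B)^4. Suppose (r_n)_{n≥0} is a sequence of positive reals with r_0 = 1 such that for every n ≥ 0, min over 1 ≤ j ≤ 5 of (r_n/r_{n+j})^{1/j} ≤ 1/B, and r_n/r_{n+1} ≤ G for all n. Then r_n ≥ q·B^n for all n ≥ 0. -/

import Mathlib

/-!
Call `m` a milestone if `r m ≥ Bᵐ r 0`. Whenever `m` is a milestone, some `j ≤ 5` gives
`r (m + j) ≥ Bʲ r m`, so `m + j` is again one; hence every `n` lies less than `5` steps after a
milestone `m`. Along the remaining `k ≤ 4` steps `r` can shrink at most by the factor `G⁻¹ = g`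
per step, so `r n ≥ gᵏ Bᵐ r 0 ≥ (g/B)⁴ Bⁿ r 0`.
-/

open Real

lemma pow_mul_le_of_div_rpow_le {a b c : ℝ} {j : ℕ} (ha : 0 < a) (hb : 0 < b) (hc : 0 < c)
    (hj : j ≠ 0) (h : (a / b) ^ ((1 : ℝ) / j) ≤ 1 / c) : c ^ j * a ≤ b := by
  rw [one_div (j : ℝ), rpow_inv_le_iff_of_pos (by positivity) (by positivity)
    (by positivity), rpow_natCast, one_div_pow, div_le_div_iff₀ hb (by positivity),
    one_mul] at h
  linarith

lemma exists_milestone {r : ℕ → ℝ} {c : ℝ} {L : ℕ} (hc : 0 ≤ c)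
    (hstep : ∀ n, ∃ j, 1 ≤ j ∧ j ≤ L ∧ c ^ j * r n ≤ r (n + j)) (n : ℕ) :
    ∃ m ≤ n, n < m + L ∧ c ^ m * r 0 ≤ r m := by
  induction n with
  | zero =>
    obtain ⟨j, hj1, hjL, -⟩ := hstep 0
    exact ⟨0, le_rfl, by omega, by simp⟩
  | succ n ih =>
    obtain ⟨m, hmn, hnm, hm⟩ := ih
    by_cases hnear : n + 1 < m + L
    · exact ⟨m, by omega, hnear, hm⟩
    obtain ⟨j, hj1, hjL, hj⟩ := hstep m
    refine ⟨m + j, by omega, by omega, ?_⟩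
    calc c ^ (m + j) * r 0 = c ^ j * (c ^ m * r 0) := by ring
      _ ≤ c ^ j * r m := by gcongr
      _ ≤ r (m + j) := hj

theorem div_pow_mul_pow_mul_le_of_jumps {r : ℕ → ℝ} {a c : ℝ} {L : ℕ} (ha : 0 ≤ a)
    (hc : 0 < c) (hac : a ≤ c) (hr0 : 0 ≤ r 0)
    (hstep : ∀ n, ∃ j, 1 ≤ j ∧ j ≤ L ∧ c ^ j * r n ≤ r (n + j)) (hsucc : ∀ n, a * r n ≤ r (n + 1)) (n : ℕ) :
    (a / c) ^ (L - 1) * c ^ n * r 0 ≤ r n := by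
  obtain ⟨m, hmn, hnm, hm⟩ := exists_milestone hc.le hstep n
  obtain ⟨k, rfl⟩ := Nat.exists_eq_add_of_le hmn
  have hdecay : a ^ k * r m ≤ r (m + k) :=
    geom_le (u := fun i ↦ r (m + i)) ha k fun i _ ↦ hsucc (m + i)
  calc (a / c) ^ (L - 1) * c ^ (m + k) * r 0
      ≤ (a / c) ^ k * c ^ (m + k) * r 0 := by
        gcongr ?_ * _ * _
        exact pow_le_pow_of_le_one (div_nonneg ha hc.le) (div_le_one_of_le₀ hac hc.le) (by omega)
    _ = a ^ k * (c ^ m * r 0) := by rw [div_pow, pow_add]; field_simp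
    _ ≤ a ^ k * r m := by gcongr
    _ ≤ r (m + k) := hdecay

theorem stmt16 (r : ℕ → ℝ) (hpos : ∀ n, 0 < r n) (h0 : r 0 = 1)
    (G g B q : ℝ) (hG : G = (Real.sqrt 5 + 1)/2) (hg : g = G - 1)
    (hB : B = (5*G - 2) ^ ((1:ℝ)/5)) (hq : q = (g/B)^4)
    (hmin : ∀ n : ℕ, ∃ j : ℕ, 1 ≤ j ∧ j ≤ 5 ∧
      (r n / r (n+j)) ^ ((1:ℝ)/j) ≤ 1/B)
    (hratio : ∀ n : ℕ, r n / r (n+1) ≤ G) :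
    ∀ n : ℕ, q * B^n ≤ r n := by
  have hGφ : G = goldenRatio := by rw [hG, goldenRatio, add_comm]
  have hgG : g * G = 1 := by rw [hg, hGφ]; linear_combination goldenRatio_sq
  have hg0 : 0 < g := by rw [hg, hGφ]; linarith [one_lt_goldenRatio]
  have hg1 : g < 1 := by rw [hg, hGφ]; linarith [goldenRatio_lt_two]
  have hB1 : 1 < B := by
    rw [hB]
    exact one_lt_rpow (by linarith) (by norm_num)
  have hsucc : ∀ n, g * r n ≤ r (n + 1) := fun n ↦
    calc g * r n ≤ g * (G * r (n + 1)) := by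
          gcongr
          exact (div_le_iff₀ (hpos _)).1 (hratio n)
      _ = r (n + 1) := by rw [← mul_assoc, hgG, one_mul]
  have hstep : ∀ n, ∃ j, 1 ≤ j ∧ j ≤ 5 ∧ B ^ j * r n ≤ r (n + j) := fun n ↦ by
    obtain ⟨j, hj1, hj5, hj⟩ := hmin n
    exact ⟨j, hj1, hj5, pow_mul_le_of_div_rpow_le (hpos n) (hpos _) (by linarith) (by omega) hj⟩
  intro n
  simpa [hq, h0] using div_pow_mul_pow_mul_le_of_jumps (by linarith) (by linarith) (by linarith)
    (hpos 0).le hstep hsucc n
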